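/- No set that is an order-0 stride generator can also be a stride generator of higher order: if {1, a₂, a₃} (1 < a₂ < a₃) is an n-stride generator SG(n, 0) of order 0 for some n ≥ 1, then there are no natural numbers n′ ≥ 1 and p′ ≥ 1 such that {1, a₂, a₃} is an n′-stride generator SG(n′, p′) of order p′. -/

import Mathlib

/-!
Let `minCoins a₂ x = x / a₂ + x % a₂`, the fewest coins of values `1` and `a₂` that make up `x`
(the greedy choice is optimal), so that `x` is represented at stride `i` with budget `n + i`
exactly when `minCoins a₂ (x + i * a₃) ≤ n + i`.

Adding `a₃` to `u` adds `minCoins a₂ a₃` coins, minus `a₂ - 1` when the residues carry. So it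
raises `minCoins` by at least one unless `a₃ % a₂ ≠ 0` and `minCoins a₂ a₃ < a₂`. An order-0
generator excludes this: the witness `y` of (SG3) has `minCoins a₂ y = n` and needs more than
`n` coins after adding `a₃`; a carry then forces `a₂ ≤ minCoins a₂ a₃`, while without a carry
and with `minCoins a₂ a₃ < a₂`, `y` would need fewer coins than `a₂ * (a₃ / a₂) - 1 < a₃`, against (SG1). Hence
`minCoins a₂ (x + p * a₃) ≥ minCoins a₂ x + p`, and no `x` can first be represented at a stride
`p ≥ 1`, contradicting (SG2) for every order `p ≥ 1`.
-/

def SGRep (n a₂ a₃ x i : ℕ) : Prop :=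
  ∃ c₁ c₂ : ℕ, x + i * a₃ = c₂ * a₂ + c₁ ∧ c₂ + c₁ ≤ n + i

def SGBreakRep (n a₂ a₃ y j : ℕ) : Prop :=
  ∃ c₁ c₂ : ℕ, y + j * a₃ = c₂ * a₂ + c₁ ∧ c₂ + c₁ ≤ n + j - 1

def IsSG (n p a₂ a₃ : ℕ) : Prop :=
  (∀ x : ℕ, 0 < x → x < a₃ → ∃ i ≤ p, SGRep n a₂ a₃ x i) ∧
  (∃ x : ℕ, 0 < x ∧ x < a₃ ∧ SGRep n a₂ a₃ x p ∧ ∀ i < p, ¬ SGRep n a₂ a₃ x i) ∧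
  (∃ y : ℕ, 0 < y ∧ y < a₃ ∧ ∀ j ≤ p + 1, ¬ SGBreakRep n a₂ a₃ y j)

def minCoins (a x : ℕ) : ℕ := x / a + x % a

section minCoins

variable {a u v x y : ℕ}

theorem minCoins_mul_add {q r : ℕ} (hr : r < a) : minCoins a (a * q + r) = q + r := by
  have ha : 0 < a := by omega
  rw [minCoins, Nat.mul_add_div ha, Nat.div_eq_of_lt hr, Nat.mul_add_mod, Nat.mod_eq_of_lt hr,
    add_zero]

theorem minCoins_le {c₁ c₂ : ℕ} (h : x = c₂ * a + c₁) : minCoins a x ≤ c₂ + c₁ := by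
  rcases Nat.eq_zero_or_pos a with rfl | ha
  · simp [minCoins, h]
  have hc₁ : c₁ / a ≤ a * (c₁ / a) := Nat.le_mul_of_pos_left _ ha
  have := Nat.div_add_mod c₁ a
  rw [minCoins, h, add_comm (c₂ * a), Nat.add_mul_div_right _ _ ha, Nat.add_mul_mod_self_right]
  omega

theorem exists_coins_iff {m : ℕ} :
    (∃ c₁ c₂ : ℕ, x = c₂ * a + c₁ ∧ c₂ + c₁ ≤ m) ↔ minCoins a x ≤ m := by
  refine ⟨fun ⟨c₁, c₂, hx, hm⟩ => (minCoins_le hx).trans hm, fun hm => ?_⟩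
  exact ⟨x % a, x / a, by rw [mul_comm, Nat.div_add_mod], hm⟩

theorem minCoins_pos (hx : 0 < x) : 0 < minCoins a x := by
  refine Nat.pos_of_ne_zero fun h => hx.ne' ?_
  obtain ⟨hdiv, hmod⟩ := Nat.add_eq_zero_iff.mp h
  rw [← Nat.div_add_mod x a, hdiv, hmod, mul_zero]

theorem minCoins_add_of_lt (h : u % a + v % a < a) :
    minCoins a (u + v) = minCoins a u + minCoins a v := by
  rw [minCoins, Nat.add_div_eq_of_add_mod_lt h, Nat.add_mod_of_add_mod_lt h, minCoins, minCoins]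
  ring

theorem minCoins_add_of_le (ha : 0 < a) (h : a ≤ u % a + v % a) :
    minCoins a (u + v) + a = minCoins a u + minCoins a v + 1 := by
  have := Nat.add_mod_add_of_le_add_mod h
  rw [minCoins, Nat.add_div_eq_of_le_mod_add_mod h ha, minCoins, minCoins]
  omega

theorem minCoins_succ_le_add (ha : 0 < a) (hv : 0 < v)
    (hcarry : 0 < v % a → a ≤ minCoins a v) (u : ℕ) :
    minCoins a u + 1 ≤ minCoins a (u + v) := by
  rcases lt_or_ge (u % a + v % a) a with h | h
  · rw [minCoins_add_of_lt h]
    exact Nat.add_le_add_left (minCoins_pos hv) _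
  · have := hcarry (by have := Nat.mod_lt u ha; omega)
    have := minCoins_add_of_le ha h
    omega

theorem minCoins_add_le_add_mul (ha : 0 < a) (hv : 0 < v)
    (hcarry : 0 < v % a → a ≤ minCoins a v) (u i : ℕ) :
    minCoins a u + i ≤ minCoins a (u + i * v) := by
  induction i with
  | zero => simp
  | succ i ih =>
    have := minCoins_succ_le_add ha hv hcarry (u + i * v)
    rw [add_mul, one_mul, ← add_assoc u]
    omega

theorem minCoins_lt_of_not_carry (hav : a ≤ v) (hy : y < v) (hv : 0 < v % a)
    (hnc : y % a + v % a < a) (hcost : minCoins a v < a) :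
    minCoins a y < minCoins a (a * (v / a) - 1) := by
  have ha : 0 < a := by omega
  have hq := Nat.div_pos hav ha
  obtain ⟨k, hk⟩ : ∃ k, v / a = k + 1 := ⟨v / a - 1, by omega⟩
  have hz : a * (v / a) - 1 = a * k + (a - 1) := by rw [hk, mul_add, mul_one]; omega
  rw [hz, minCoins_mul_add (by omega)]
  have hydiv : y / a ≤ v / a := Nat.div_le_div_right hy.le
  have hv' := Nat.div_add_mod v a
  have hy' := Nat.div_add_mod y a
  have hvcost : minCoins a v = v / a + v % a := rfl
  rw [minCoins]
  rcases hydiv.lt_or_eq with hlt | heq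
  · omega
  · rw [heq] at hy'
    omega

end minCoins

section IsSG

variable {n a₂ a₃ : ℕ}

theorem sgRep_iff {x i : ℕ} : SGRep n a₂ a₃ x i ↔ minCoins a₂ (x + i * a₃) ≤ n + i :=
  exists_coins_iff

theorem sgBreakRep_iff {y j : ℕ} :
    SGBreakRep n a₂ a₃ y j ↔ minCoins a₂ (y + j * a₃) ≤ n + j - 1 :=
  exists_coins_iff

theorem IsSG.le_minCoins_of_order_zero (ha₂ : 1 < a₂) (ha₃ : a₂ < a₃) (hsg : IsSG n 0 a₂ a₃)
    (hr : 0 < a₃ % a₂) : a₂ ≤ minCoins a₂ a₃ := by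
  obtain ⟨hrep, -, y, hy_pos, hya₃, hbreak⟩ := hsg
  have ha : 0 < a₂ := by omega
  have hbound : ∀ x, 0 < x → x < a₃ → minCoins a₂ x ≤ n := fun x hx hxa₃ => by
    obtain ⟨i, hi, hx⟩ := hrep x hx hxa₃
    obtain rfl := Nat.le_zero.mp hi
    simpa using sgRep_iff.mp hx
  have hy_le : minCoins a₂ y ≤ n := hbound y hy_pos hya₃
  have hy_ge : n ≤ minCoins a₂ y := by
    have := sgBreakRep_iff.not.mp (hbreak 0 (by omega))
    simp only [zero_mul, add_zero] at this
    omega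
  have hy_add : n + 1 ≤ minCoins a₂ (y + a₃) := by
    have := sgBreakRep_iff.not.mp (hbreak 1 le_rfl)
    simp only [one_mul, add_tsub_cancel_right] at this
    omega
  by_contra hlt
  rcases lt_or_ge (y % a₂ + a₃ % a₂) a₂ with hnc | hc
  · have hz := minCoins_lt_of_not_carry ha₃.le hya₃ hr hnc (by omega)
    have hqa : a₂ ≤ a₂ * (a₃ / a₂) := Nat.le_mul_of_pos_right _ (Nat.div_pos ha₃.le ha)
    have hqa₃ : a₂ * (a₃ / a₂) ≤ a₃ := Nat.mul_div_le a₃ a₂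
    have := hbound (a₂ * (a₃ / a₂) - 1) (by omega) (by omega)
    omega
  · have := minCoins_add_of_le ha hc
    omega

end IsSG

theorem stmt10_general (n a₂ a₃ : ℕ) (ha₂ : 1 < a₂) (ha₃ : a₂ < a₃)
    (hsg : IsSG n 0 a₂ a₃) :
    ¬ ∃ n' p' : ℕ, 1 ≤ n' ∧ 1 ≤ p' ∧ IsSG n' p' a₂ a₃ := by
  rintro ⟨n', p', -, hp', -, ⟨x, -, -, hxp, hx⟩, -⟩
  have hx₀ := sgRep_iff.not.mp (hx 0 hp')
  simp only [zero_mul, add_zero] at hx₀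
  have := minCoins_add_le_add_mul (by omega) (by omega)
    (hsg.le_minCoins_of_order_zero ha₂ ha₃) x p'
  have := sgRep_iff.mp hxp
  omega

theorem stmt10 (n a₂ a₃ : ℕ) (hn : 1 ≤ n) (ha₂ : 1 < a₂) (ha₃ : a₂ < a₃)
    (hsg : IsSG n 0 a₂ a₃) :
    ¬ ∃ n' p' : ℕ, 1 ≤ n' ∧ 1 ≤ p' ∧ IsSG n' p' a₂ a₃ :=
  stmt10_general n a₂ a₃ ha₂ ha₃ hsg
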